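/- For every integer k ≥ 1, define the real numbers x_k = 8k − 5, y_k = 4√(4k² + 2k + 1) − 5, and z_k = 8k − 1. Then 2 ≤ y_k − x_k ≤ 4(√7 − 2) and 4(3 − √7) ≤ z_k − y_k ≤ 2, with the extreme values 4(√7 − 2) = 2.583… and 4(3 − √7) = 1.416… attained at k = 1, and both differences converging to 2 as k → ∞. -/
import Mathlib

open Real Filter

lemma sqrt_lb (k : ℕ) :
    2*(k:ℝ) + 1/2 ≤ Real.sqrt (4*(k:ℝ)^2+2*k+1) := by
  have h : (2*(k:ℝ) + 1/2)^2 ≤ 4*(k:ℝ)^2+2*k+1 := by nlinarith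
  calc 2*(k:ℝ) + 1/2 = Real.sqrt ((2*(k:ℝ)+1/2)^2) := (Real.sqrt_sq (by positivity)).symm
    _ ≤ _ := Real.sqrt_le_sqrt h

lemma sqrt_ub (k : ℕ) :
    Real.sqrt (4*(k:ℝ)^2+2*k+1) ≤ 2*(k:ℝ) + 1/2 + 3/(16*k+4) := by
  have hk : (0:ℝ) < 16*k+4 := by positivity
  have h : 4*(k:ℝ)^2+2*k+1 ≤ (2*(k:ℝ) + 1/2 + 3/(16*k+4))^2 := by
    have hd : (0:ℝ) < 3/(16*k+4) := by positivity
    have he : (2*(k:ℝ)+1/2) * (3/(16*(k:ℝ)+4)) = 3/8 := by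
      field_simp; ring
    nlinarith [sq_nonneg (3/(16*(k:ℝ)+4))]
  calc Real.sqrt (4*(k:ℝ)^2+2*k+1) ≤ Real.sqrt ((2*(k:ℝ)+1/2+3/(16*k+4))^2) :=
        Real.sqrt_le_sqrt h
    _ = _ := Real.sqrt_sq (by positivity)

lemma sqrt7_facts : Real.sqrt 7 ^ 2 = 7 ∧ 5/2 ≤ Real.sqrt 7 := by
  have h := Real.sq_sqrt (by norm_num : (7:ℝ) ≥ 0)
  refine ⟨h, ?_⟩
  nlinarith [Real.sqrt_nonneg 7]

lemma sqrt_ub7 (k : ℕ) (hk : 1 ≤ k) :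
    Real.sqrt (4*(k:ℝ)^2+2*k+1) ≤ 2*(k:ℝ) + Real.sqrt 7 - 2 := by
  obtain ⟨ht2, ht⟩ := sqrt7_facts
  have hk1 : (1:ℝ) ≤ k := by exact_mod_cast hk
  have h : 4*(k:ℝ)^2+2*k+1 ≤ (2*(k:ℝ) + Real.sqrt 7 - 2)^2 := by
    nlinarith [mul_nonneg (by linarith : (0:ℝ) ≤ 4*Real.sqrt 7 - 10) (by linarith : (0:ℝ) ≤ (k:ℝ)-1)]
  calc Real.sqrt (4*(k:ℝ)^2+2*k+1) ≤ Real.sqrt ((2*(k:ℝ) + Real.sqrt 7 - 2)^2) :=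
        Real.sqrt_le_sqrt h
    _ = _ := Real.sqrt_sq (by linarith)

lemma denom_tendsto : Tendsto (fun k : ℕ => 3/(16*(k:ℝ)+4)) atTop (nhds 0) := by
  apply Tendsto.div_atTop tendsto_const_nhds
  apply tendsto_atTop_add_const_right
  exact (tendsto_natCast_atTop_atTop (R := ℝ)).const_mul_atTop (by norm_num)

/-- Cost of the longest edge of hexagonal length `2k`: `x_k = 8k - 5`. -/
noncomputable def costX (k : ℕ) : ℝ := 8 * (k : ℝ) - 5

/-- Cost of the second-longest edge of hexagonal length `2k+1`:
`y_k = 4√(4k² + 2k + 1) - 5`. -/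
noncomputable def costY (k : ℕ) : ℝ := 4 * Real.sqrt (4 * (k : ℝ) ^ 2 + 2 * k + 1) - 5

/-- Cost of the longest edge of hexagonal length `2k+1`: `z_k = 8k - 1`. -/
noncomputable def costZ (k : ℕ) : ℝ := 8 * (k : ℝ) - 1

/-- For every `k ≥ 1`, `2 ≤ y_k - x_k ≤ 4(√7 - 2)` and `4(3 - √7) ≤ z_k - y_k ≤ 2`,
with the extreme values `4(√7 - 2)` and `4(3 - √7)` attained at `k = 1`, and both
differences converging to `2` as `k → ∞`. -/
theorem hex_cost_differences_odd :
    (∀ k : ℕ, 1 ≤ k →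
      2 ≤ costY k - costX k ∧ costY k - costX k ≤ 4 * (Real.sqrt 7 - 2) ∧
      4 * (3 - Real.sqrt 7) ≤ costZ k - costY k ∧ costZ k - costY k ≤ 2) ∧
    costY 1 - costX 1 = 4 * (Real.sqrt 7 - 2) ∧
    costZ 1 - costY 1 = 4 * (3 - Real.sqrt 7) ∧
    Filter.Tendsto (fun k : ℕ => costY k - costX k) Filter.atTop (nhds 2) ∧
    Filter.Tendsto (fun k : ℕ => costZ k - costY k) Filter.atTop (nhds 2) := by
  have hs1 : Real.sqrt (4 * ((1:ℕ) : ℝ) ^ 2 + 2 * ((1:ℕ):ℝ) + 1) = Real.sqrt 7 := by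
    norm_num
  refine ⟨?_, ?_, ?_, ?_, ?_⟩
  · intro k hk
    have h1 := sqrt_lb k
    have h2 := sqrt_ub7 k hk
    refine ⟨by simp only [costX, costY]; linarith, by simp only [costX, costY]; linarith,
      by simp only [costZ, costY]; linarith, by simp only [costZ, costY]; linarith⟩
  · simp only [costX, costY, hs1]; push_cast; ring
  · simp only [costZ, costY, hs1]; push_cast; ring
  · have hle : ∀ k : ℕ, costY k - costX k ≤ 2 + 4*(3/(16*(k:ℝ)+4)) := by
      intro k; have := sqrt_ub k; simp only [costX, costY]; linarith
    have hge : ∀ k : ℕ, 2 ≤ costY k - costX k := by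
      intro k; have := sqrt_lb k; simp only [costX, costY]; linarith
    have h2 : Tendsto (fun k : ℕ => 2 + 4*(3/(16*(k:ℝ)+4))) atTop (nhds 2) := by
      have := (denom_tendsto.const_mul 4).const_add 2
      simpa using this
    exact tendsto_of_tendsto_of_tendsto_of_le_of_le tendsto_const_nhds h2 hge hle
  · have hle : ∀ k : ℕ, costZ k - costY k ≤ 2 := by
      intro k; have := sqrt_lb k; simp only [costZ, costY]; linarith
    have hge : ∀ k : ℕ, 2 - 4*(3/(16*(k:ℝ)+4)) ≤ costZ k - costY k := by
      intro k; have := sqrt_ub k; simp only [costZ, costY]; linarith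
    have h2 : Tendsto (fun k : ℕ => 2 - 4*(3/(16*(k:ℝ)+4))) atTop (nhds 2) := by
      have := (denom_tendsto.const_mul 4).const_sub 2
      simpa using this
    exact tendsto_of_tendsto_of_tendsto_of_le_of_le h2 tendsto_const_nhds hge hle
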